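/- Let H be a Hilbert space, T : H → H compact with I − T injective, (P_N) orthogonal projections converging strongly to the identity, u the solution of (I − T)u = g, and u_N ∈ V_N := range(P_N) the Galerkin solution satisfying (I − P_N T)u_N = P_N g (assumed to exist for large N with ‖(I − P_N T)^{-1}‖ ≤ C). Let J(v) = (v, \bar{j}) for some j ∈ H, and let ζ solve the dual problem ((I − T)v, ζ) = J(v) for all v ∈ H. Then |J(u) − J(u_N)| ≤ ‖I − T‖ · ‖u − u_N‖ · ‖ζ − P_N ζ‖. -/

import Mathlib

/-- Aubin–Nitsche superconvergence of functionals of Galerkin solutions of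
second-kind operator equations: with `J(v) = ⟪v, jv⟫`, the dual solution `ζ`
satisfying `⟪(I-T)v, ζ⟫ = J(v)` for all `v`, and the Galerkin solution `u_N`
of `(I - P T)u_N = P g`, one has
`|J(u) - J(u_N)| ≤ ‖I - T‖ ‖u - u_N‖ ‖ζ - P ζ‖`. -/
theorem galerkin_functional_superconvergence
    {H : Type*} [NormedAddCommGroup H] [InnerProductSpace ℂ H] [CompleteSpace H]
    (T : H →L[ℂ] H) (V : Submodule ℂ H) [V.HasOrthogonalProjection]
    (C : ℝ) (g u uN jv ζ : H)
    (hu : u - T u = g)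
    (huN : uN ∈ V)
    (huNeq : uN - (V.subtypeL ∘L V.orthogonalProjectionOnto) (T uN)
      = (V.subtypeL ∘L V.orthogonalProjectionOnto) g)
    (hC : ∀ w : H, ‖w‖ ≤ C * ‖w - (V.subtypeL ∘L V.orthogonalProjectionOnto) (T w)‖)
    (hζ : ∀ v : H, (inner ℂ (v - T v) ζ : ℂ) = inner ℂ v jv) :
    ‖(inner ℂ u jv : ℂ) - inner ℂ uN jv‖ ≤
      ‖ContinuousLinearMap.id ℂ H - T‖ * ‖u - uN‖
        * ‖ζ - (V.subtypeL ∘L V.orthogonalProjectionOnto) ζ‖ := by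
  set P : H →L[ℂ] H := V.subtypeL ∘L V.orthogonalProjectionOnto with hP
  set w : H := (u - uN) - T (u - uN) with hw
  -- Galerkin orthogonality: P w = 0
  have hPw : P w = 0 := by
    have h1 : P (u - T u) = P g := by rw [hu]
    have h2 : P uN = uN := by
      exact V.starProjection_eq_self_iff.mpr huN
    have : P w = P (u - T u) - (uN - P (T uN)) := by
      simp only [hw, map_sub]
      rw [h2]
      abel
    rw [this, h1, huNeq, sub_self]
  -- J(u) - J(uN) = ⟪w, ζ - P ζ⟫
  have key : (inner ℂ u jv : ℂ) - inner ℂ uN jv = inner ℂ w (ζ - P ζ) := by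
    have h1 : (inner ℂ w ζ : ℂ) = inner ℂ u jv - inner ℂ uN jv := by
      rw [hw, hζ (u - uN), inner_sub_left]
    have h2 : (inner ℂ w (P ζ) : ℂ) = 0 := by
      have : (inner ℂ w (P ζ) : ℂ) = inner ℂ (P w) ζ := by
        exact (V.inner_starProjection_left_eq_right w ζ).symm
      rw [this, hPw, inner_zero_left]
    rw [inner_sub_right, h1, h2, sub_zero]
  rw [key]
  calc ‖(inner ℂ w (ζ - P ζ) : ℂ)‖ ≤ ‖w‖ * ‖ζ - P ζ‖ := norm_inner_le_norm w (ζ - P ζ)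
    _ ≤ ‖ContinuousLinearMap.id ℂ H - T‖ * ‖u - uN‖ * ‖ζ - P ζ‖ := by
        apply mul_le_mul_of_nonneg_right _ (norm_nonneg _)
        have : w = (ContinuousLinearMap.id ℂ H - T) (u - uN) := by
          simp [hw]
        rw [this]
        exact (ContinuousLinearMap.id ℂ H - T).le_opNorm (u - uN)
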